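/- For the nullcline h(c) = (Γ/(μK₁)) · c(1+c)/((K+c)(b+c)) with 0 < b, 0 < K, b + K < 1, the derivative dh/dc equals (Γ/(μK₁)) · (c²(b+K−1) + 2bcK + bK)/((K+c)²(b+c)²), and the unique positive critical point is c_M = (bK + √((1−b)b(K−K²)))/(1 − b − K). -/

import Mathlib

/-!
The derivative is the quotient rule; its sign is that of the quadratic
`a c² + 2 β c + γ` with `a = b + K - 1 < 0` and `β = γ = b K > 0`. Since `a γ < 0`, the root
`s = √(β² - a γ)` of the reduced discriminant exceeds `|β|`, so of the two roots `(s - β) / a`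
and `(β + s) / (-a)` only the second is positive. The reduced discriminant
`b²K² + (1 - b - K) b K` factors as `(1 - b) b (K - K²)`, which gives `c_M`.
-/

theorem hasDerivAt_mul_one_add_div_mul {b K c : ℝ} (hK : K + c ≠ 0) (hb : b + c ≠ 0) :
    HasDerivAt (fun c : ℝ => c * (1 + c) / ((K + c) * (b + c)))
      ((c ^ 2 * (b + K - 1) + 2 * b * c * K + b * K) / ((K + c) ^ 2 * (b + c) ^ 2)) c := by
  have hnum : HasDerivAt (fun x : ℝ => x * (1 + x)) (1 * (1 + c) + c * 1) c :=
    (hasDerivAt_id c).mul ((hasDerivAt_id c).const_add 1)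
  have hden : HasDerivAt (fun x : ℝ => (K + x) * (b + x)) (1 * (b + c) + (K + c) * 1) c :=
    ((hasDerivAt_id c).const_add K).mul ((hasDerivAt_id c).const_add b)
  refine (hnum.div hden (mul_ne_zero hK hb)).congr_deriv ?_
  field_simp
  ring

theorem pos_root_iff_of_neg_leading_coeff {a β γ x : ℝ} (ha : a < 0) (hγ : 0 < γ) :
    0 < x ∧ a * x ^ 2 + 2 * β * x + γ = 0 ↔ x = (β + √(β ^ 2 - a * γ)) / -a := by
  set s := √(β ^ 2 - a * γ)
  have hss : s * s = β ^ 2 - a * γ := Real.mul_self_sqrt (by nlinarith [sq_nonneg β])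
  have hdiscrim : discrim a (2 * β) γ = (2 * s) * (2 * s) := by
    rw [discrim]; linear_combination -4 * hss
  obtain ⟨hneg, hpos⟩ : -s < β ∧ β < s := Real.sq_lt.mp (by nlinarith)
  have hroots := quadratic_eq_zero_iff ha.ne hdiscrim x
  rw [← sq] at hroots
  constructor
  · rintro ⟨hx, hroot⟩
    rcases hroots.mp hroot with hx' | hx'
    · have : x < 0 := hx' ▸ div_neg_of_pos_of_neg (by linarith) (by linarith)
      linarith
    · rw [hx']; field_simp; ring
  · intro hx
    refine ⟨hx ▸ div_pos (by linarith) (by linarith), hroots.mpr (Or.inr ?_)⟩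
    rw [hx]; field_simp; ring

theorem nullcline_numerator_pos_root_iff {b K c : ℝ} (hb : 0 < b) (hK : 0 < K)
    (hbK : b + K < 1) :
    0 < c ∧ c ^ 2 * (b + K - 1) + 2 * b * c * K + b * K = 0 ↔
      c = (b * K + √((1 - b) * b * (K - K ^ 2))) / (1 - b - K) := by
  have h := pos_root_iff_of_neg_leading_coeff (x := c) (β := b * K)
    (by linarith : b + K - 1 < 0) (by positivity : 0 < b * K)
  rw [show (b * K) ^ 2 - (b + K - 1) * (b * K) = (1 - b) * b * (K - K ^ 2) by ring,
    show -(b + K - 1) = 1 - b - K by ring] at h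
  rw [← h]
  constructor <;> rintro ⟨hc, hroot⟩ <;> exact ⟨hc, by linear_combination hroot⟩

theorem atri_nullcline_derivative_and_critical_point_general
    (b K Γ μ K₁ : ℝ) (hb0 : 0 < b) (hK0 : 0 < K) (hΓ : 0 < Γ) (hμ : 0 < μ)
    (hK₁ : 0 < K₁) (hbK : b + K < 1) :
    (∀ c : ℝ, 0 < c →
      HasDerivAt (fun c : ℝ => Γ / (μ * K₁) * (c * (1 + c) / ((K + c) * (b + c))))
        (Γ / (μ * K₁) * ((c ^ 2 * (b + K - 1) + 2 * b * c * K + b * K) /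
          ((K + c) ^ 2 * (b + c) ^ 2))) c) ∧
    (∃! c : ℝ, 0 < c ∧
        Γ / (μ * K₁) * ((c ^ 2 * (b + K - 1) + 2 * b * c * K + b * K) /
          ((K + c) ^ 2 * (b + c) ^ 2)) = 0) ∧
    ((b * K + Real.sqrt ((1 - b) * b * (K - K ^ 2))) / (1 - b - K) > 0 ∧
      Γ / (μ * K₁) *
        ((((b * K + Real.sqrt ((1 - b) * b * (K - K ^ 2))) / (1 - b - K)) ^ 2 * (b + K - 1)
            + 2 * b * ((b * K + Real.sqrt ((1 - b) * b * (K - K ^ 2))) / (1 - b - K)) * K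
            + b * K) /
          ((K + (b * K + Real.sqrt ((1 - b) * b * (K - K ^ 2))) / (1 - b - K)) ^ 2 *
            (b + (b * K + Real.sqrt ((1 - b) * b * (K - K ^ 2))) / (1 - b - K)) ^ 2)) = 0) := by
  have hC : Γ / (μ * K₁) ≠ 0 := by positivity
  have hcritical : ∀ c : ℝ,
      (0 < c ∧ Γ / (μ * K₁) * ((c ^ 2 * (b + K - 1) + 2 * b * c * K + b * K) /
        ((K + c) ^ 2 * (b + c) ^ 2)) = 0) ↔
      c = (b * K + √((1 - b) * b * (K - K ^ 2))) / (1 - b - K) := by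
    intro c
    rw [← nullcline_numerator_pos_root_iff hb0 hK0 hbK]
    refine and_congr_right fun hc => ?_
    have hden : (K + c) ^ 2 * (b + c) ^ 2 ≠ 0 := by positivity
    simp only [mul_eq_zero, div_eq_zero_iff, hC, hden, false_or, or_false]
  refine ⟨fun c hc => ?_, ⟨_, (hcritical _).mpr rfl, fun c hc => (hcritical c).mp hc⟩,
    (hcritical _).mpr rfl⟩
  exact (hasDerivAt_mul_one_add_div_mul (by positivity) (by positivity)).const_mul _

/-- Derivative of the `c`-nullcline and its unique positive critical point. -/
theorem atri_nullcline_derivative_and_critical_point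
    (b K Γ μ K₁ : ℝ) (hb0 : 0 < b) (hK0 : 0 < K) (hΓ : 0 < Γ) (hμ : 0 < μ)
    (hK₁ : 0 < K₁) (hb1 : b < 1) (hK1 : K < 1) (hbK : b + K < 1) :
    (∀ c : ℝ, 0 < c →
      HasDerivAt (fun c : ℝ => Γ / (μ * K₁) * (c * (1 + c) / ((K + c) * (b + c))))
        (Γ / (μ * K₁) * ((c ^ 2 * (b + K - 1) + 2 * b * c * K + b * K) /
          ((K + c) ^ 2 * (b + c) ^ 2))) c) ∧
    (∃! c : ℝ, 0 < c ∧
        Γ / (μ * K₁) * ((c ^ 2 * (b + K - 1) + 2 * b * c * K + b * K) /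
          ((K + c) ^ 2 * (b + c) ^ 2)) = 0) ∧
    ((b * K + Real.sqrt ((1 - b) * b * (K - K ^ 2))) / (1 - b - K) > 0 ∧
      Γ / (μ * K₁) *
        ((((b * K + Real.sqrt ((1 - b) * b * (K - K ^ 2))) / (1 - b - K)) ^ 2 * (b + K - 1)
            + 2 * b * ((b * K + Real.sqrt ((1 - b) * b * (K - K ^ 2))) / (1 - b - K)) * K
            + b * K) /
          ((K + (b * K + Real.sqrt ((1 - b) * b * (K - K ^ 2))) / (1 - b - K)) ^ 2 *
            (b + (b * K + Real.sqrt ((1 - b) * b * (K - K ^ 2))) / (1 - b - K)) ^ 2)) = 0) :=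
  atri_nullcline_derivative_and_critical_point_general b K Γ μ K₁ hb0 hK0 hΓ hμ hK₁ hbK
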